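/- arXiv:1112.2774 — 6 statements merged into one kernel-verified Lean document; each statement's English description precedes it below -/
import Mathlib

section
/- (Local Neighborhood.) Suppose a tie-strength measure TS satisfies conditional independence of vertices. Then for every event log G and all distinct persons u, v, the tie strength of u and v is affected only by events that both u and v attend: TS(G, u, v) = TS(G_{u,v}, u, v), where G_{u,v} is the sub-multiset of events of G that contain both u and v. -/
/-- **Local Neighborhood.** If a tie-strength measure `TS` on event logs
(finite multisets of events, an event being a finite set of people) satisfies
conditional independence of vertices, then for all distinct `u v` the tie
strength of `u` and `v` is affected only by the events that both attend:
`TS G u v = TS G_{u,v} u v` where `G_{u,v}` is the sub-multiset of events of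
`G` containing both `u` and `v`. -/
theorem local_neighborhood {V : Type*} [DecidableEq V]
    (TS : Multiset (Finset V) → V → V → ℝ)
    (hvert : ∀ (G : Multiset (Finset V)) (u v : V), u ≠ v →
      TS G u v = TS (G.filter fun P => u ∈ P) u v ∧
      TS G u v = TS (G.filter fun P => v ∈ P) u v)
    (G : Multiset (Finset V)) (u v : V) (huv : u ≠ v) :
    TS G u v = TS (G.filter fun P => u ∈ P ∧ v ∈ P) u v := by
  have h1 := (hvert G u v huv).1
  have h2 := (hvert (G.filter fun P => u ∈ P) u v huv).2
  rw [h1, h2, Multiset.filter_filter]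
  simp [and_comm]
end

section
/- Suppose a tie-strength measure TS satisfies: (a) the baseline TS({{u,v}}, u, v) = 1 for distinct u, v; (b) the intimacy axiom: for every event P containing distinct u, v and a third person w ∈ P, TS({P \ {w}}, u, v) ≥ TS({P}, u, v); and (c) the larger-events axiom: if |P| ≥ |Q| then Σ over unordered pairs {x,y} ⊆ P of TS({P}, x, y) ≥ Σ over unordered pairs {x,y} ⊆ Q of TS({Q}, x, y). Then for every event P with |P| = k ≥ 2, the total tie strength f(k) = Σ over unordered pairs {x,y} ⊆ P of TS({P}, x, y) satisfies 1 ≤ f(k) ≤ C(k,2), where C(k,2) = k(k−1)/2. -/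
/-- If a (symmetric) tie-strength measure `TS` satisfies (a) the baseline
`TS {{u,v}} u v = 1`, (b) the intimacy axiom, and (c) the larger-events axiom,
then for every event `P` with `|P| = k ≥ 2` the total tie strength
`f k = Σ_{unordered pairs {x,y} ⊆ P} TS {P} x y` (formalized as half the sum
over ordered pairs of distinct elements of `P`) satisfies
`1 ≤ f k ≤ C(k,2) = k(k-1)/2`. -/
theorem total_tie_strength_bounds {V : Type*} [DecidableEq V]
    (TS : Multiset (Finset V) → V → V → ℝ)
    (hsymm : ∀ (G : Multiset (Finset V)) (u v : V), TS G u v = TS G v u)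
    (hbase : ∀ u v : V, u ≠ v → TS {({u, v} : Finset V)} u v = 1)
    (hint : ∀ (P : Finset V) (u v w : V), u ≠ v → u ∈ P → v ∈ P → w ∈ P →
      w ≠ u → w ≠ v → TS {P} u v ≤ TS {P.erase w} u v)
    (hlarger : ∀ P Q : Finset V, Q.card ≤ P.card →
      (∑ p ∈ Q.offDiag, TS {Q} p.1 p.2) / 2 ≤ (∑ p ∈ P.offDiag, TS {P} p.1 p.2) / 2)
    (P : Finset V) (hP : 2 ≤ P.card) :
    1 ≤ (∑ p ∈ P.offDiag, TS {P} p.1 p.2) / 2 ∧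
    (∑ p ∈ P.offDiag, TS {P} p.1 p.2) / 2 ≤ (P.card : ℝ) * ((P.card : ℝ) - 1) / 2 := by
  -- key: each individual tie strength is at most 1
  have key : ∀ n (Q : Finset V) (x y : V), Q.card = n → x ≠ y → x ∈ Q → y ∈ Q →
      TS {Q} x y ≤ 1 := by
    intro n
    induction n with
    | zero => intro Q x y hc _ hx _; simp [Finset.card_eq_zero] at hc; subst hc; simp at hx
    | succ n ih =>
      intro Q x y hc hxy hx hy
      by_cases hQ : Q = {x, y}
      · subst hQ; rw [hbase x y hxy]
      · -- there is a third element w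
        have hsub : ¬ Q ⊆ {x, y} := by
          intro h
          exact hQ (Finset.Subset.antisymm h (by
            intro z hz
            simp at hz
            rcases hz with rfl | rfl <;> assumption))
        obtain ⟨w, hwQ, hw⟩ := Finset.not_subset.mp hsub
        simp only [Finset.mem_insert, Finset.mem_singleton, not_or] at hw
        have hle := hint Q x y w hxy hx hy hwQ hw.1 hw.2
        have hcard : (Q.erase w).card = n := by
          rw [Finset.card_erase_of_mem hwQ, hc]; rfl
        exact hle.trans (ih (Q.erase w) x y hcard hxy
          (Finset.mem_erase.mpr ⟨fun h => hw.1 h.symm, hx⟩)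
          (Finset.mem_erase.mpr ⟨fun h => hw.2 h.symm, hy⟩))
  constructor
  · -- lower bound via hlarger with Q = {u, v}
    obtain ⟨u, hu, v, hv, huv⟩ := Finset.one_lt_card.mp hP
    set Q : Finset V := {u, v} with hQdef
    have hQcard : Q.card = 2 := Finset.card_pair huv
    have hoff : Q.offDiag = {(u, v), (v, u)} := by
      ext ⟨a, b⟩
      simp only [Finset.mem_offDiag, hQdef, Finset.mem_insert, Finset.mem_singleton,
        Prod.mk.injEq]
      constructor
      · rintro ⟨(rfl | rfl), (rfl | rfl), hab⟩ <;> tauto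
      · rintro (⟨rfl, rfl⟩ | ⟨rfl, rfl⟩) <;> tauto
    have hsum : (∑ p ∈ Q.offDiag, TS {Q} p.1 p.2) = 2 := by
      rw [hoff, Finset.sum_insert (by simp [Prod.ext_iff, huv]), Finset.sum_singleton]
      rw [hsymm {Q} v u, hbase u v huv]
      norm_num
    have := hlarger P Q (hQcard ▸ hP)
    rw [hsum] at this
    linarith
  · -- upper bound: each term ≤ 1
    have hbound : (∑ p ∈ P.offDiag, TS {P} p.1 p.2) ≤ (P.offDiag.card : ℝ) := by
      calc (∑ p ∈ P.offDiag, TS {P} p.1 p.2) ≤ ∑ _p ∈ P.offDiag, (1 : ℝ) := by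
            apply Finset.sum_le_sum
            rintro ⟨a, b⟩ hab
            rw [Finset.mem_offDiag] at hab
            exact key P.card P a b rfl hab.2.2 hab.1 hab.2.1
        _ = (P.offDiag.card : ℝ) := by simp
    have hcard : (P.offDiag.card : ℝ) = (P.card : ℝ) * ((P.card : ℝ) - 1) := by
      rw [Finset.offDiag_card]
      have h1 : P.card ≤ P.card * P.card := Nat.le_mul_of_pos_left _ (by omega)
      push_cast [h1]
      ring
    rw [hcard] at hbound
    linarith
end

section
/- Suppose a tie-strength measure TS satisfies the isomorphism axiom, the baseline (TS({{u,v}}, u, v) = 1), the intimacy axiom (TS({P \ {w}}, u, v) ≥ TS({P}, u, v) for w ∈ P, w ∉ {u,v}), and the larger-events axiom. Then for every event P containing distinct u, v with |P| = n ≥ 2: 1/C(n,2) ≤ TS({P}, u, v) ≤ 1, and the single-event tie strength is antitone in the event size: if |Q| ≤ |P| with u, v ∈ Q ⊆ P, then TS({Q}, u, v) ≥ TS({P}, u, v). -/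
private lemma swap_mem_of_mem {V : Type*} [DecidableEq V] (P : Finset V) (a b : V)
    (ha : a ∈ P) (hb : b ∈ P) : ∀ x ∈ P, Equiv.swap a b x ∈ P := by
  intro x hx
  rcases eq_or_ne x a with rfl | hxa
  · simpa [Equiv.swap_apply_left] using hb
  rcases eq_or_ne x b with rfl | hxb
  · simpa [Equiv.swap_apply_right] using ha
  · simpa [Equiv.swap_apply_of_ne_of_ne hxa hxb] using hx

private lemma image_perm_eq {V : Type*} [DecidableEq V] (P : Finset V) (σ : Equiv.Perm V)
    (h : ∀ x ∈ P, σ x ∈ P) : P.image σ = P := by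
  apply Finset.eq_of_subset_of_card_le
  · intro y hy
    simp only [Finset.mem_image] at hy
    obtain ⟨x, hx, rfl⟩ := hy
    exact h x hx
  · rw [Finset.card_image_of_injective _ σ.injective]

/-- If a tie-strength measure `TS` satisfies the isomorphism axiom, the baseline
`TS {{u,v}} u v = 1`, the intimacy axiom, and the larger-events axiom, then for
every event `P` containing distinct `u, v` (so `|P| = n ≥ 2`) we have
`1/C(n,2) ≤ TS {P} u v ≤ 1`, and the single-event tie strength is antitone in
the event size: if `u, v ∈ Q ⊆ P` then `TS {Q} u v ≥ TS {P} u v`. -/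
theorem single_event_bounds_and_antitone {V : Type*} [DecidableEq V]
    (TS : Multiset (Finset V) → V → V → ℝ)
    (hiso : ∀ (σ : Equiv.Perm V) (G : Multiset (Finset V)) (u v : V), u ≠ v →
      TS (G.map fun P => P.image σ) (σ u) (σ v) = TS G u v)
    (hbase : ∀ u v : V, u ≠ v → TS {({u, v} : Finset V)} u v = 1)
    (hint : ∀ (P : Finset V) (u v w : V), u ≠ v → u ∈ P → v ∈ P → w ∈ P →
      w ≠ u → w ≠ v → TS {P} u v ≤ TS {P.erase w} u v)
    (hlarger : ∀ P Q : Finset V, Q.card ≤ P.card →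
      (∑ p ∈ Q.offDiag, TS {Q} p.1 p.2) / 2 ≤ (∑ p ∈ P.offDiag, TS {P} p.1 p.2) / 2) :
    ∀ (P : Finset V) (u v : V), u ≠ v → u ∈ P → v ∈ P →
      (1 / ((P.card : ℝ) * ((P.card : ℝ) - 1) / 2) ≤ TS {P} u v ∧ TS {P} u v ≤ 1) ∧
      (∀ Q : Finset V, u ∈ Q → v ∈ Q → Q ⊆ P → TS {P} u v ≤ TS {Q} u v) := by
  -- antitonicity in the event
  have anti : ∀ P Q : Finset V, Q ⊆ P → ∀ u v : V, u ≠ v → u ∈ Q → v ∈ Q →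
      TS {P} u v ≤ TS {Q} u v := by
    intro P
    induction P using Finset.strongInductionOn with
    | _ P ih =>
      intro Q hQP u v huv hu hv
      rcases eq_or_ne Q P with rfl | hne
      · exact le_refl _
      · obtain ⟨w, hwP, hwQ⟩ : ∃ w ∈ P, w ∉ Q := by
          by_contra h
          push_neg at h
          exact hne (Finset.Subset.antisymm hQP h)
        have hwu : w ≠ u := fun h => hwQ (h ▸ hu)
        have hwv : w ≠ v := fun h => hwQ (h ▸ hv)
        have h1 := hint P u v w huv (hQP hu) (hQP hv) hwP hwu hwv
        have hsub : Q ⊆ P.erase w := fun x hx =>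
          Finset.mem_erase.mpr ⟨fun he => hwQ (he ▸ hx), hQP hx⟩
        exact h1.trans (ih (P.erase w) (Finset.erase_ssubset hwP) Q hsub u v huv hu hv)
  -- all pairs in a single event have equal tie strength
  have hpair : ∀ (P : Finset V) (u v x y : V), u ≠ v → x ≠ y → u ∈ P → v ∈ P → x ∈ P → y ∈ P →
      TS {P} x y = TS {P} u v := by
    intro P u v x y huv hxy hu hv hx hy
    set τ₁ := Equiv.swap u x with hτ₁
    have hv₁ : τ₁ v ∈ P := swap_mem_of_mem P u x hu hx v hv
    have hv1x : τ₁ v ≠ x := by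
      intro h
      have h2 : τ₁ v = τ₁ u := by rw [h, hτ₁, Equiv.swap_apply_left]
      exact huv (τ₁.injective h2).symm
    set σ : Equiv.Perm V := (Equiv.swap (τ₁ v) y) * τ₁ with hσ
    have hσmem : ∀ z ∈ P, σ z ∈ P := by
      intro z hz
      exact swap_mem_of_mem P (τ₁ v) y hv₁ hy _ (swap_mem_of_mem P u x hu hx z hz)
    have hσu : σ u = x := by
      simp only [hσ, Equiv.Perm.mul_apply, hτ₁, Equiv.swap_apply_left]
      exact Equiv.swap_apply_of_ne_of_ne hv1x.symm hxy
    have hσv : σ v = y := by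
      simp only [hσ, Equiv.Perm.mul_apply, Equiv.swap_apply_left]
    have h := hiso σ {P} u v huv
    rw [Multiset.map_singleton, image_perm_eq P σ hσmem, hσu, hσv] at h
    exact h
  intro P u v huv hu hv
  have hQP : ({u, v} : Finset V) ⊆ P := by
    intro x hx
    simp only [Finset.mem_insert, Finset.mem_singleton] at hx
    rcases hx with rfl | rfl
    · exact hu
    · exact hv
  have hupper : TS {P} u v ≤ 1 := by
    have := anti P {u, v} hQP u v huv (Finset.mem_insert_self _ _)
      (Finset.mem_insert_of_mem (Finset.mem_singleton_self _))
    rw [hbase u v huv] at this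
    exact this
  -- sum over offDiag of P
  have hsumP : ∑ p ∈ P.offDiag, TS {P} p.1 p.2 = (P.offDiag.card : ℝ) * TS {P} u v := by
    rw [Finset.sum_congr rfl (fun p hp => ?_), Finset.sum_const, nsmul_eq_mul]
    obtain ⟨h1, h2, h3⟩ := Finset.mem_offDiag.mp hp
    exact hpair P u v p.1 p.2 huv h3 hu hv h1 h2
  -- sum over offDiag of {u,v}
  have hoff : ({u, v} : Finset V).offDiag = {(u, v), (v, u)} := by
    ext p
    simp only [Finset.mem_offDiag, Finset.mem_insert, Finset.mem_singleton]
    constructor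
    · rintro ⟨h1, h2, h3⟩
      rcases h1 with rfl | rfl <;> rcases h2 with h2 | h2
      · exact absurd h2.symm h3
      · left; exact Prod.ext rfl h2
      · right; exact Prod.ext rfl h2
      · exact absurd h2.symm h3
    · rintro (rfl | rfl)
      · exact ⟨Or.inl rfl, Or.inr rfl, huv⟩
      · exact ⟨Or.inr rfl, Or.inl rfl, huv.symm⟩
  have hvu : TS {({u, v} : Finset V)} v u = 1 := by
    have := hbase v u huv.symm
    rwa [Finset.pair_comm v u] at this
  have hsumQ : ∑ p ∈ ({u, v} : Finset V).offDiag, TS {({u, v} : Finset V)} p.1 p.2 = 2 := by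
    rw [hoff, Finset.sum_insert (by simp [Prod.ext_iff, huv]), Finset.sum_singleton]
    rw [hbase u v huv, hvu]
    norm_num
  have hcard2 : ({u, v} : Finset V).card = 2 := Finset.card_pair huv
  have hcardle : ({u, v} : Finset V).card ≤ P.card := Finset.card_le_card hQP
  have hlarge := hlarger P {u, v} hcardle
  rw [hsumP, hsumQ] at hlarge
  have hn2 : 2 ≤ P.card := hcard2 ▸ hcardle
  have hoffcard : (P.offDiag.card : ℝ) = (P.card : ℝ) * ((P.card : ℝ) - 1) := by
    rw [Finset.offDiag_card]
    have h1 : P.card ≤ P.card * P.card := Nat.le_mul_of_pos_left _ (by omega)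
    push_cast [Nat.cast_sub h1]
    ring
  rw [hoffcard] at hlarge
  set c : ℝ := (P.card : ℝ) * ((P.card : ℝ) - 1) / 2 with hc
  have hcpos : 0 < c := by
    have h1 : (2 : ℝ) ≤ (P.card : ℝ) := by exact_mod_cast hn2
    have : (1 : ℝ) ≤ (P.card : ℝ) - 1 := by linarith
    rw [hc]
    nlinarith
  have hlow : 1 / c ≤ TS {P} u v := by
    rw [div_le_iff₀ hcpos]
    have : 1 ≤ c * TS {P} u v := by
      rw [hc]
      linarith [hlarge]
    linarith [this, mul_comm c (TS {P} u v)]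
  exact ⟨⟨hlow, hupper⟩, fun Q hQu hQv hQsub => anti P Q hQsub u v huv hQu hQv⟩
end

section
/- (Characterization Theorem.) Suppose a tie-strength measure TS satisfies: the isomorphism axiom; the baseline (TS(∅,u,v) = 0 and TS({{u,v}}, u, v) = 1); the frequency axiom; the intimacy axiom; the larger-events axiom; conditional independence of vertices; conditional independence of events (there is a function g₂ : ℝ × ℝ → ℝ, monotone in each argument, with TS(G + {P}, u, v) = g₂(TS(G,u,v), TS({P},u,v)) for every log G and event P); and submodularity (TS(G + {Q}, u, v) ≤ TS(G, u, v) + TS({Q}, u, v)). Then there exist a function h : ℕ → ℝ, antitone on {2,3,…} with 1/C(n,2) ≤ h(n) ≤ 1 for all n ≥ 2, and a function g : List ℝ → ℝ that is monotone (g(l ++ l') ≥ g(l), and g is pointwise monotone on lists of equal length) and submodular (g(l ++ [x]) ≤ g(l) + x for x in the range of h), such that for every event log G and distinct u, v: TS(G, u, v) = g(h(|P_1|), …, h(|P_k|)), where P_1, …, P_k are the events of G attended by both u and v. -/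
/-!
Conditional independence of vertices reduces `TS G u v` to the events attended by both `u` and
`v`, and the isomorphism axiom makes `TS {P} u v` a function `h` of `|P|` alone. The larger-events
axiom, compared against the baseline event `{u, v}`, gives `h n ≥ 1 / C(n, 2)`, and intimacy
(removing a third attendee) makes `h` antitone. Conditional independence of events then writes
`TS G u v` as a fold of `g₂` over the values `h |Pᵢ|`.

That fold is only controlled on lists of realisable values, so `g` is taken to be its monotone
envelope: the supremum of the fold over realisable lists dominated by a sublist of the argument.
Frequency and monotonicity of `g₂` show that the envelope agrees with the fold on realisable
lists, and submodularity (which bounds the fold by the sum of its entries) keeps the supremum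
finite and makes the envelope submodular.
-/

open Finset

theorem List.SublistForall₂.of_append_singleton {α β : Type*} {R : α → β → Prop} :
    ∀ {l : List β} {x : β} {d : List α}, SublistForall₂ R d (l ++ [x]) →
      SublistForall₂ R d l ∨ ∃ d₁ y, d = d₁ ++ [y] ∧ R y x ∧ SublistForall₂ R d₁ l
  | [], _, _, .nil => .inl .nil
  | [], _, _, .cons hyx .nil => .inr ⟨[], _, rfl, hyx, .nil⟩
  | [], _, _, .cons_right .nil => .inl .nil
  | _ :: _, _, _, .nil => .inl .nil
  | _ :: _, _, _, .cons hya h => by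
    rcases of_append_singleton h with h | ⟨d₁, y, rfl, hyx, h⟩
    · exact .inl (.cons hya h)
    · exact .inr ⟨_ :: d₁, y, rfl, hyx, .cons hya h⟩
  | _ :: _, _, _, .cons_right h => by
    rcases of_append_singleton h with h | ⟨d₁, y, rfl, hyx, h⟩
    · exact .inl (.cons_right h)
    · exact .inr ⟨d₁, y, rfl, hyx, .cons_right h⟩

theorem List.foldr_le_foldr_of_sublistForall₂ {S : Set ℝ} {g : ℝ → ℝ → ℝ} {b : ℝ}
    (hg₁ : ∀ y, Monotone (g · y)) (hg₂ : ∀ x, Monotone (g x))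
    (hinfl : ∀ l : List ℝ, (∀ x ∈ l, x ∈ S) → ∀ a ∈ S,
      l.foldr (flip g) b ≤ g (l.foldr (flip g) b) a)
    {d l : List ℝ} (h : d.SublistForall₂ (· ≤ ·) l) (hl : ∀ x ∈ l, x ∈ S) :
    d.foldr (flip g) b ≤ l.foldr (flip g) b := by
  induction h with
  | @nil l =>
    induction l with
    | nil => rfl
    | cons a l ih =>
      have hl' := List.forall_mem_cons.1 hl
      exact (ih hl'.2).trans (hinfl l hl'.2 a hl'.1)
  | @cons a a' d l haa' _ ih =>
    have hl' := List.forall_mem_cons.1 hl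
    exact (hg₁ a (ih hl'.2)).trans (hg₂ _ haa')
  | @cons_right a d l _ ih =>
    have hl' := List.forall_mem_cons.1 hl
    exact (ih hl'.2).trans (hinfl l hl'.2 a hl'.1)

theorem Multiset.exists_coe_eq_of_map_eq_coe {α β : Type*} {f : α → β} :
    ∀ {s : List β} {D : Multiset α}, D.map f = s → ∃ d : List α, ↑d = D ∧ d.map f = s
  | [], D, h => ⟨[], by simpa [eq_comm] using h, rfl⟩
  | b :: s, D, h => by
    classical
    rw [← Multiset.cons_coe] at h
    obtain ⟨a, ha, rfl, herase⟩ := (Multiset.map_eq_cons f D s b).2 h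
    obtain ⟨d, hd, rfl⟩ := exists_coe_eq_of_map_eq_coe herase
    exact ⟨a :: d, by rw [← Multiset.cons_coe, hd, Multiset.cons_erase ha], rfl⟩

theorem Equiv.Perm.exists_pair_apply_eq {β : Type*} {a b a' b' : β} (hab : a ≠ b)
    (hab' : a' ≠ b') : ∃ σ : Perm β, σ a = a' ∧ σ b = b' := by
  have hinj {x y : β} (hxy : x ≠ y) : Function.Injective ![x, y] := by
    intro i j; fin_cases i <;> fin_cases j <;> simp [hxy, hxy.symm]
  obtain ⟨σ, hσ⟩ := exists_extending_pair _ _ (hinj hab) (hinj hab')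
  exact ⟨σ, hσ 0, hσ 1⟩

theorem Equiv.Perm.exists_pair_apply_eq_and_image_eq {β : Type*} [DecidableEq β]
    {P Q : Finset β} (hPQ : #P = #Q) {a b a' b' : β} (hab : a ≠ b) (ha : a ∈ P) (hb : b ∈ P)
    (hab' : a' ≠ b') (ha' : a' ∈ Q) (hb' : b' ∈ Q) :
    ∃ σ : Perm β, σ a = a' ∧ σ b = b' ∧ P.image σ = Q := by
  let e₀ : P ≃ Q := P.equivOfCardEq hPQ
  obtain ⟨ρ, hρa, hρb⟩ := exists_pair_apply_eq (a := e₀ ⟨a, ha⟩) (b := e₀ ⟨b, hb⟩)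
    (a' := ⟨a', ha'⟩) (b' := ⟨b', hb'⟩) (by simpa using hab) (by simpa using hab')
  let e : P ≃ Q := e₀.trans ρ
  obtain ⟨σ, hσ⟩ := exists_extending_pair (fun x : P => (x : β)) (fun x => (e x : β))
    Subtype.val_injective (Subtype.val_injective.comp e.injective)
  refine ⟨σ, by simpa [e, hρa] using hσ ⟨a, ha⟩, by simpa [e, hρb] using hσ ⟨b, hb⟩, ?_⟩
  ext y
  simp only [mem_image]
  constructor
  · rintro ⟨x, hx, rfl⟩
    exact (hσ ⟨x, hx⟩) ▸ (e ⟨x, hx⟩).2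
  · intro hy
    obtain ⟨⟨x, hx⟩, hex⟩ := e.surjective ⟨y, hy⟩
    exact ⟨x, hx, by rw [hσ ⟨x, hx⟩, hex]⟩

section MonotoneEnvelope

structure IsSubadditiveOn (S : Set ℝ) (F : List ℝ → ℝ) : Prop where
  nil : F [] = 0
  concat_le : ∀ l x, (∀ y ∈ l, y ∈ S) → x ∈ S → F (l ++ [x]) ≤ F l + x

noncomputable def monotoneEnvelope (S : Set ℝ) (F : List ℝ → ℝ) (l : List ℝ) : ℝ :=
  sSup (F '' {d | (∀ x ∈ d, x ∈ S) ∧ d.SublistForall₂ (· ≤ ·) l})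

variable {S : Set ℝ} {F : List ℝ → ℝ}

theorem IsSubadditiveOn.le_sum (hF : IsSubadditiveOn S F) {d : List ℝ}
    (hd : ∀ x ∈ d, x ∈ S) : F d ≤ d.sum := by
  induction d using List.reverseRecOn with
  | nil => simp [hF.nil]
  | append_singleton d x ih =>
    have hd' : (∀ y ∈ d, y ∈ S) ∧ x ∈ S := by simpa [or_imp, forall_and] using hd
    calc F (d ++ [x]) ≤ F d + x := hF.concat_le d x hd'.1 hd'.2
      _ ≤ d.sum + x := by gcongr; exact ih hd'.1
      _ = (d ++ [x]).sum := by simp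

theorem IsSubadditiveOn.bddAbove (hF : IsSubadditiveOn S F) (l : List ℝ) :
    BddAbove (F '' {d | (∀ x ∈ d, x ∈ S) ∧ d.SublistForall₂ (· ≤ ·) l}) := by
  refine ⟨(l.map (max · 0)).sum, Set.forall_mem_image.2 fun d ⟨hd, hdl⟩ => ?_⟩
  have hl : l.SublistForall₂ (· ≤ ·) (l.map (max · 0)) := List.sublistForall₂_iff.2 ⟨_,
    List.forall₂_map_right_iff.2 (List.forall₂_same.2 fun x _ => le_max_left x 0), .refl _⟩
  calc F d ≤ d.sum := hF.le_sum hd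
    _ ≤ (l.map (max · 0)).sum := (_root_.trans hdl hl).sum_le_sum (by simp)

theorem monotoneEnvelope_mono (hF : IsSubadditiveOn S F) {l l' : List ℝ}
    (h : l.SublistForall₂ (· ≤ ·) l') : monotoneEnvelope S F l ≤ monotoneEnvelope S F l' :=
  csSup_le_csSup (hF.bddAbove l') ⟨F [], [], ⟨by simp, .nil⟩, rfl⟩ <|
    Set.image_mono fun _ ⟨hd, hdl⟩ => ⟨hd, _root_.trans hdl h⟩

theorem monotoneEnvelope_concat_le (hF : IsSubadditiveOn S F) (l : List ℝ) {x : ℝ}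
    (hx : 0 ≤ x) : monotoneEnvelope S F (l ++ [x]) ≤ monotoneEnvelope S F l + x := by
  have hbdd := hF.bddAbove l
  refine csSup_le ⟨F [], [], ⟨by simp, .nil⟩, rfl⟩ (Set.forall_mem_image.2 fun d ⟨hd, hdl⟩ => ?_)
  rcases hdl.of_append_singleton with hdl | ⟨d₁, y, rfl, hyx, hd₁l⟩
  · have : F d ≤ monotoneEnvelope S F l := le_csSup hbdd ⟨d, ⟨hd, hdl⟩, rfl⟩
    linarith
  · have hd' : (∀ z ∈ d₁, z ∈ S) ∧ y ∈ S := by simpa [or_imp, forall_and] using hd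
    calc F (d₁ ++ [y]) ≤ F d₁ + y := hF.concat_le d₁ y hd'.1 hd'.2
      _ ≤ monotoneEnvelope S F l + x :=
        add_le_add (le_csSup hbdd ⟨d₁, ⟨hd'.1, hd₁l⟩, rfl⟩) hyx

theorem monotoneEnvelope_eq (hF : IsSubadditiveOn S F)
    (hmono : ∀ d l, (∀ x ∈ d, x ∈ S) → (∀ x ∈ l, x ∈ S) →
      d.SublistForall₂ (· ≤ ·) l → F d ≤ F l)
    {l : List ℝ} (hl : ∀ x ∈ l, x ∈ S) : monotoneEnvelope S F l = F l :=
  le_antisymm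
    (csSup_le ⟨F l, l, ⟨hl, refl l⟩, rfl⟩
      (Set.forall_mem_image.2 fun d ⟨hd, hdl⟩ => hmono d l hd hl hdl))
    (le_csSup (hF.bddAbove l) ⟨l, ⟨hl, refl l⟩, rfl⟩)

end MonotoneEnvelope

namespace TieStrength

structure EventPair (V : Type*) where
  event : Finset V
  fst : V
  snd : V
  fst_ne_snd : fst ≠ snd
  fst_mem : fst ∈ event
  snd_mem : snd ∈ event

variable {V : Type*} (TS : Multiset (Finset V) → V → V → ℝ)

def strength (e : EventPair V) : ℝ := TS {e.event} e.fst e.snd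

-- The fallback `1 / C(n, 2)` at sizes carried by no event keeps `sizeStrength` within its bounds
-- and antitone there as well.
noncomputable def sizeStrength : ℕ → ℝ :=
  Function.extend (fun e : EventPair V => #e.event) (strength TS) fun n => (n.choose 2 : ℝ)⁻¹

def EmptyBaseline : Prop := ∀ u v : V, u ≠ v → TS 0 u v = 0

def Frequency : Prop :=
  ∀ (G : Multiset (Finset V)) (P : Finset V) (u v : V), u ≠ v → u ∈ P → v ∈ P →
    TS G u v ≤ TS (P ::ₘ G) u v

def Submodular : Prop :=
  ∀ (G : Multiset (Finset V)) (Q : Finset V) (u v : V), u ≠ v →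
    TS (Q ::ₘ G) u v ≤ TS G u v + TS {Q} u v

def EventRecursion (g₂ : ℝ → ℝ → ℝ) : Prop :=
  ∀ (G : Multiset (Finset V)) (P : Finset V) (u v : V), u ≠ v →
    TS (P ::ₘ G) u v = g₂ (TS G u v) (TS {P} u v)

variable {TS}

theorem sizeStrength_of_forall_card_ne {n : ℕ} (hn : ∀ e : EventPair V, #e.event ≠ n) :
    sizeStrength TS n = (n.choose 2 : ℝ)⁻¹ :=
  Function.extend_apply' _ _ _ fun ⟨e, he⟩ => hn e he

theorem coe_eq_foldr {g₂ : ℝ → ℝ → ℝ} (hbase0 : EmptyBaseline TS) (hg₂ : EventRecursion TS g₂)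
    {u v : V} (huv : u ≠ v) (d : List (Finset V)) :
    TS d u v = (d.map fun P => TS {P} u v).foldr (flip g₂) 0 := by
  induction d with
  | nil => exact hbase0 u v huv
  | cons P d ih => rw [← Multiset.cons_coe, hg₂ _ _ _ _ huv, ih]; rfl

variable [DecidableEq V] (TS)

def IsoInvariant : Prop :=
  ∀ (σ : Equiv.Perm V) (G : Multiset (Finset V)) (u v : V), u ≠ v →
    TS (G.map fun P => P.image σ) (σ u) (σ v) = TS G u v

def PairBaseline : Prop := ∀ u v : V, u ≠ v → TS {({u, v} : Finset V)} u v = 1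

def Intimacy : Prop :=
  ∀ (P : Finset V) (u v w : V), u ≠ v → u ∈ P → v ∈ P → w ∈ P → w ≠ u → w ≠ v →
    TS {P} u v ≤ TS {P.erase w} u v

def LargerEvents : Prop :=
  ∀ P Q : Finset V, #Q ≤ #P → ∑ p ∈ Q.offDiag, TS {Q} p.1 p.2 ≤ ∑ p ∈ P.offDiag, TS {P} p.1 p.2

def VertexIndependent : Prop :=
  ∀ (G : Multiset (Finset V)) (u v : V), u ≠ v →
    TS G u v = TS (G.filter fun P => u ∈ P) u v ∧ TS G u v = TS (G.filter fun P => v ∈ P) u v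

variable {TS}

theorem strength_eq_of_card_eq (hiso : IsoInvariant TS) {e e' : EventPair V}
    (h : #e.event = #e'.event) : strength TS e = strength TS e' := by
  obtain ⟨σ, hu, hv, hP⟩ := Equiv.Perm.exists_pair_apply_eq_and_image_eq h
    e.fst_ne_snd e.fst_mem e.snd_mem e'.fst_ne_snd e'.fst_mem e'.snd_mem
  have := hiso σ {e.event} e.fst e.snd e.fst_ne_snd
  rw [Multiset.map_singleton, hP, hu, hv] at this
  exact this.symm

theorem exists_singleton_eq_strength (hiso : IsoInvariant TS) {u v : V} (huv : u ≠ v)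
    (e : EventPair V) : ∃ P, u ∈ P ∧ v ∈ P ∧ TS {P} u v = strength TS e := by
  obtain ⟨σ, hu, hv⟩ := Equiv.Perm.exists_pair_apply_eq e.fst_ne_snd huv
  refine ⟨e.event.image σ, hu ▸ mem_image_of_mem σ e.fst_mem,
    hv ▸ mem_image_of_mem σ e.snd_mem, ?_⟩
  have := hiso σ {e.event} e.fst e.snd e.fst_ne_snd
  rwa [Multiset.map_singleton, hu, hv] at this

theorem exists_map_singleton_eq (hiso : IsoInvariant TS) {u v : V} (huv : u ≠ v)
    {l : List ℝ} (hl : ∀ x ∈ l, x ∈ Set.range (strength TS)) :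
    ∃ d : List (Finset V), d.map (fun P => TS {P} u v) = l := by
  induction l with
  | nil => exact ⟨[], rfl⟩
  | cons x l ih =>
    obtain ⟨⟨e, rfl⟩, hl'⟩ := List.forall_mem_cons.1 hl
    obtain ⟨P, -, -, hP⟩ := exists_singleton_eq_strength hiso huv e
    obtain ⟨d, rfl⟩ := ih hl'
    exact ⟨P :: d, by simp [hP]⟩

theorem sizeStrength_card (hiso : IsoInvariant TS) (e : EventPair V) :
    sizeStrength TS #e.event = strength TS e :=
  Function.FactorsThrough.extend_apply (fun _ _ h => strength_eq_of_card_eq hiso h) _ e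

theorem singleton_eq_sizeStrength (hiso : IsoInvariant TS) {P : Finset V} {u v : V}
    (huv : u ≠ v) (hu : u ∈ P) (hv : v ∈ P) : TS {P} u v = sizeStrength TS #P :=
  (sizeStrength_card hiso ⟨P, u, v, huv, hu, hv⟩).symm

theorem sizeStrength_two (hiso : IsoInvariant TS) (hbase : PairBaseline TS) :
    sizeStrength TS 2 = 1 := by
  by_cases h : ∃ e : EventPair V, #e.event = 2
  · obtain ⟨⟨_, u, v, huv, -, -⟩, -⟩ := h
    rw [← card_pair huv, ← singleton_eq_sizeStrength hiso huv (mem_insert_self u {v})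
      (mem_insert_of_mem (mem_singleton_self v)), hbase u v huv]
  · simp only [not_exists] at h
    simp [sizeStrength_of_forall_card_ne h]

theorem sum_offDiag_singleton (hiso : IsoInvariant TS) (P : Finset V) :
    ∑ p ∈ P.offDiag, TS {P} p.1 p.2 = 2 * ((#P).choose 2 : ℝ) * sizeStrength TS #P := by
  rw [sum_congr rfl fun p hp => singleton_eq_sizeStrength hiso (mem_offDiag.1 hp).2.2
    (mem_offDiag.1 hp).1 (mem_offDiag.1 hp).2.1, sum_const, offDiag_card, nsmul_eq_mul,
    Nat.cast_sub (Nat.le_mul_self _), Nat.cast_choose_two]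
  push_cast
  ring

theorem choose_two_inv_le_sizeStrength (hiso : IsoInvariant TS) (hbase : PairBaseline TS)
    (hlarger : LargerEvents TS) (n : ℕ) : (n.choose 2 : ℝ)⁻¹ ≤ sizeStrength TS n := by
  by_cases h : ∃ e : EventPair V, #e.event = n
  · obtain ⟨⟨P, u, v, huv, hu, hv⟩, rfl⟩ := h
    have hpair : ({u, v} : Finset V) ⊆ P := insert_subset hu (singleton_subset_iff.2 hv)
    have hle := hlarger P {u, v} (card_le_card hpair)
    rw [sum_offDiag_singleton hiso, sum_offDiag_singleton hiso, card_pair huv,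
      sizeStrength_two hiso hbase] at hle
    have hpos : (0 : ℝ) < (#P).choose 2 := by
      exact_mod_cast Nat.choose_pos (card_pair huv ▸ card_le_card hpair)
    rw [inv_le_iff_one_le_mul₀ hpos]
    simp only [Nat.choose_self, Nat.cast_one] at hle
    linarith
  · simp only [not_exists] at h
    rw [sizeStrength_of_forall_card_ne h]

theorem sizeStrength_succ_le (hiso : IsoInvariant TS) (hbase : PairBaseline TS)
    (hlarger : LargerEvents TS) (hint : Intimacy TS) {n : ℕ} (hn : 2 ≤ n) :
    sizeStrength TS (n + 1) ≤ sizeStrength TS n := by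
  by_cases h : ∃ e : EventPair V, #e.event = n + 1
  · obtain ⟨⟨P, u, v, huv, hu, hv⟩, hP⟩ := h
    simp only at hP
    obtain ⟨w, hw, hwv⟩ := (P.erase u).exists_mem_ne (by rw [card_erase_of_mem hu]; omega) v
    have hwu := ne_of_mem_erase hw
    have hwP := mem_of_mem_erase hw
    calc sizeStrength TS (n + 1) = TS {P} u v := by
          rw [← hP, singleton_eq_sizeStrength hiso huv hu hv]
      _ ≤ TS {P.erase w} u v := hint P u v w huv hu hv hwP hwu hwv
      _ = sizeStrength TS n := by
          rw [singleton_eq_sizeStrength hiso huv (mem_erase.2 ⟨hwu.symm, hu⟩)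
            (mem_erase.2 ⟨hwv.symm, hv⟩), card_erase_of_mem hwP, hP, Nat.add_sub_cancel]
  · simp only [not_exists] at h
    have hpos : (0 : ℝ) < n.choose 2 := by exact_mod_cast Nat.choose_pos hn
    calc sizeStrength TS (n + 1) = ((n + 1).choose 2 : ℝ)⁻¹ := sizeStrength_of_forall_card_ne h
      _ ≤ (n.choose 2 : ℝ)⁻¹ :=
          inv_anti₀ hpos (by exact_mod_cast Nat.choose_le_choose 2 n.le_succ)
      _ ≤ sizeStrength TS n := choose_two_inv_le_sizeStrength hiso hbase hlarger n

theorem antitoneOn_sizeStrength (hiso : IsoInvariant TS) (hbase : PairBaseline TS)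
    (hlarger : LargerEvents TS) (hint : Intimacy TS) :
    AntitoneOn (sizeStrength TS) (Set.Ici 2) :=
  antitoneOn_nat_Ici_of_succ_le fun _ hn => sizeStrength_succ_le hiso hbase hlarger hint hn

theorem sizeStrength_le_one (hiso : IsoInvariant TS) (hbase : PairBaseline TS)
    (hlarger : LargerEvents TS) (hint : Intimacy TS) {n : ℕ} (hn : 2 ≤ n) :
    sizeStrength TS n ≤ 1 :=
  sizeStrength_two hiso hbase ▸
    antitoneOn_sizeStrength hiso hbase hlarger hint Set.self_mem_Ici hn hn

theorem foldr_le_of_frequency {g₂ : ℝ → ℝ → ℝ} (hiso : IsoInvariant TS)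
    (hbase0 : EmptyBaseline TS) (hg₂ : EventRecursion TS g₂) (hfreq : Frequency TS)
    {l : List ℝ} (hl : ∀ x ∈ l, x ∈ Set.range (strength TS)) {a : ℝ}
    (ha : a ∈ Set.range (strength TS)) :
    l.foldr (flip g₂) 0 ≤ g₂ (l.foldr (flip g₂) 0) a := by
  obtain ⟨⟨P, u, v, huv, hu, hv⟩, rfl⟩ := ha
  obtain ⟨d, rfl⟩ := exists_map_singleton_eq hiso huv hl
  rw [← coe_eq_foldr hbase0 hg₂ huv, strength, ← hg₂ _ _ _ _ huv]
  exact hfreq _ _ _ _ huv hu hv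

theorem isSubadditiveOn_foldr {g₂ : ℝ → ℝ → ℝ} (hiso : IsoInvariant TS)
    (hbase0 : EmptyBaseline TS) (hg₂ : EventRecursion TS g₂) (hsub : Submodular TS) :
    IsSubadditiveOn (Set.range (strength TS)) fun l => l.foldr (flip g₂) 0 := by
  refine ⟨rfl, fun l x hl hx => ?_⟩
  obtain ⟨⟨P, u, v, huv, -, -⟩, rfl⟩ := hx
  obtain ⟨d, rfl⟩ := exists_map_singleton_eq hiso huv hl
  have hconcat : d.map (fun P => TS {P} u v) ++ [TS {P} u v] =
      (d ++ [P]).map fun P => TS {P} u v := by simp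
  have hcoe : ((d ++ [P] : List (Finset V)) : Multiset (Finset V)) = P ::ₘ d := by simp
  rw [strength, hconcat, ← coe_eq_foldr hbase0 hg₂ huv, ← coe_eq_foldr hbase0 hg₂ huv, hcoe]
  exact hsub _ _ _ _ huv

theorem eq_filter_attended (hvert : VertexIndependent TS) (G : Multiset (Finset V)) {u v : V}
    (huv : u ≠ v) :
    TS G u v = TS (G.filter fun P => u ∈ P ∧ v ∈ P) u v := by
  rw [(hvert G u v huv).1, (hvert _ u v huv).2, Multiset.filter_filter]
  simp_rw [and_comm]

def attendedSizes (G : Multiset (Finset V)) (u v : V) : List ℕ :=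
  ((G.filter fun P => u ∈ P ∧ v ∈ P).map card).sort (· ≤ ·)

theorem forall_mem_map_attendedSizes (hiso : IsoInvariant TS) (G : Multiset (Finset V))
    {u v : V} (huv : u ≠ v) :
    ∀ x ∈ (attendedSizes G u v).map (sizeStrength TS), x ∈ Set.range (strength TS) := by
  simp only [attendedSizes, List.forall_mem_map, Multiset.mem_sort, Multiset.mem_map,
    Multiset.mem_filter, forall_exists_index, and_imp]
  rintro _ P - hu hv rfl
  exact ⟨⟨P, u, v, huv, hu, hv⟩, (sizeStrength_card hiso _).symm⟩

theorem eq_foldr_attendedSizes {g₂ : ℝ → ℝ → ℝ} (hiso : IsoInvariant TS)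
    (hbase0 : EmptyBaseline TS) (hg₂ : EventRecursion TS g₂) (hvert : VertexIndependent TS)
    (G : Multiset (Finset V)) {u v : V} (huv : u ≠ v) :
    TS G u v = ((attendedSizes G u v).map (sizeStrength TS)).foldr (flip g₂) 0 := by
  obtain ⟨d, hdG, hdcard⟩ := Multiset.exists_coe_eq_of_map_eq_coe
    (Multiset.sort_eq ((G.filter fun P => u ∈ P ∧ v ∈ P).map card) (· ≤ ·)).symm
  have hdmem (P : Finset V) (hP : P ∈ d) : u ∈ P ∧ v ∈ P := by
    rw [← Multiset.mem_coe, hdG] at hP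
    exact (Multiset.mem_filter.1 hP).2
  have hsizes : (d.map card).map (sizeStrength TS) = d.map fun P => TS {P} u v := by
    rw [List.map_map]
    exact List.map_congr_left fun P hP =>
      (singleton_eq_sizeStrength hiso huv (hdmem P hP).1 (hdmem P hP).2).symm
  rw [attendedSizes, ← hdcard, hsizes, eq_filter_attended hvert G huv, ← hdG,
    coe_eq_foldr hbase0 hg₂ huv]

end TieStrength

open TieStrength

/-- **Characterization Theorem.** If a tie-strength measure `TS` satisfies the
isomorphism axiom, the baseline, the frequency axiom, the intimacy axiom, the
larger-events axiom, conditional independence of vertices, conditional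
independence of events, and submodularity, then there are functions
`h : ℕ → ℝ` (antitone on `{2,3,…}`, with `1/C(n,2) ≤ h n ≤ 1` for `n ≥ 2`) and
`g : List ℝ → ℝ` (monotone under appending, pointwise monotone on lists of
equal length, and submodular on values of `h`) such that for every event log
`G` and distinct `u, v`:
`TS G u v = g (h |P₁|, …, h |P_k|)` where `P₁, …, P_k` are the events of `G`
attended by both `u` and `v` (sizes listed in nondecreasing order). -/
theorem tie_strength_characterization {V : Type*} [DecidableEq V]
    (TS : Multiset (Finset V) → V → V → ℝ)
    (hiso : ∀ (σ : Equiv.Perm V) (G : Multiset (Finset V)) (u v : V), u ≠ v →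
      TS (G.map fun P => P.image σ) (σ u) (σ v) = TS G u v)
    (hbase0 : ∀ u v : V, u ≠ v → TS 0 u v = 0)
    (hbase1 : ∀ u v : V, u ≠ v → TS {({u, v} : Finset V)} u v = 1)
    (hfreq : ∀ (G : Multiset (Finset V)) (P : Finset V) (u v : V), u ≠ v →
      u ∈ P → v ∈ P → TS G u v ≤ TS (P ::ₘ G) u v)
    (hint : ∀ (P : Finset V) (u v w : V), u ≠ v → u ∈ P → v ∈ P → w ∈ P →
      w ≠ u → w ≠ v → TS {P} u v ≤ TS {P.erase w} u v)
    (hlarger : ∀ P Q : Finset V, Q.card ≤ P.card →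
      ∑ p ∈ Q.offDiag, TS {Q} p.1 p.2 ≤ ∑ p ∈ P.offDiag, TS {P} p.1 p.2)
    (hvert : ∀ (G : Multiset (Finset V)) (u v : V), u ≠ v →
      TS G u v = TS (G.filter fun P => u ∈ P) u v ∧
      TS G u v = TS (G.filter fun P => v ∈ P) u v)
    (hev : ∃ g₂ : ℝ → ℝ → ℝ, (∀ y, Monotone fun x => g₂ x y) ∧
      (∀ x, Monotone fun y => g₂ x y) ∧
      ∀ (G : Multiset (Finset V)) (P : Finset V) (u v : V), u ≠ v →
        TS (P ::ₘ G) u v = g₂ (TS G u v) (TS {P} u v))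
    (hsub : ∀ (G : Multiset (Finset V)) (Q : Finset V) (u v : V), u ≠ v →
      TS (Q ::ₘ G) u v ≤ TS G u v + TS {Q} u v) :
    ∃ (h : ℕ → ℝ) (g : List ℝ → ℝ),
      AntitoneOn h {n : ℕ | 2 ≤ n} ∧
      (∀ n : ℕ, 2 ≤ n → 1 / ((n : ℝ) * ((n : ℝ) - 1) / 2) ≤ h n ∧ h n ≤ 1) ∧
      (∀ l l' : List ℝ, g l ≤ g (l ++ l')) ∧
      (∀ x y : List ℝ, List.Forall₂ (· ≤ ·) x y → g x ≤ g y) ∧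
      (∀ (l : List ℝ) (x : ℝ), (∃ n : ℕ, h n = x) → g (l ++ [x]) ≤ g l + x) ∧
      (∀ (G : Multiset (Finset V)) (u v : V), u ≠ v →
        TS G u v =
          g ((((G.filter fun P => u ∈ P ∧ v ∈ P).map Finset.card).sort (· ≤ ·)).map h)) := by
  obtain ⟨g₂, hg₂₁, hg₂₂, hg₂⟩ := hev
  have hF := isSubadditiveOn_foldr hiso hbase0 hg₂ hsub
  have hlower := choose_two_inv_le_sizeStrength hiso hbase1 hlarger
  have hnonneg (n : ℕ) : 0 ≤ sizeStrength TS n :=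
    (inv_nonneg.2 (Nat.cast_nonneg _)).trans (hlower n)
  refine ⟨sizeStrength TS, monotoneEnvelope _ _, antitoneOn_sizeStrength hiso hbase1 hlarger hint,
    fun n hn => ⟨by simpa [← Nat.cast_choose_two] using hlower n,
      sizeStrength_le_one hiso hbase1 hlarger hint hn⟩,
    fun l l' => monotoneEnvelope_mono hF (List.sublist_append_left l l').sublistForall₂,
    fun x y hxy => monotoneEnvelope_mono hF (List.sublistForall₂_iff.2 ⟨y, hxy, .refl y⟩),
    fun l x ⟨n, hn⟩ => monotoneEnvelope_concat_le hF l (hn ▸ hnonneg n),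
    fun G u v huv => ?_⟩
  exact (eq_foldr_attendedSizes hiso hbase0 hg₂ hvert G huv).trans
    (monotoneEnvelope_eq hF (fun _ _ _ hl hdl => List.foldr_le_foldr_of_sublistForall₂ hg₂₁ hg₂₂
      (fun _ hl _ ha => foldr_le_of_frequency hiso hbase0 hg₂ hfreq hl ha) hdl hl)
      (forall_mem_map_attendedSizes hiso G huv)).symm
end

section
/- Fix an event log G and suppose a tie-strength measure TS has the characterized form: TS(G, u, v) = g(h(|P_1|), …, h(|P_k|)), where P_1, …, P_k are the events of G containing both u and v, listed in nondecreasing order of size, h : ℕ → ℝ is antitone, and g : List ℝ → ℝ satisfies g(l ++ l') ≥ g(l) and is pointwise monotone on lists of equal length. For each pair of distinct persons (u,v), let profile(u,v) be the nondecreasing sorted list of sizes |P| over events P of G containing both u and v. Then TS induces an order on pairs extending the partial order ≤_N on profiles: whenever profile(u₂,v₂) ≤_N profile(u₁,v₁), one has TS(G, u₂, v₂) ≤ TS(G, u₁, v₁). -/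
/-- The relation `≤_N` on finite sequences of natural numbers:
`b ≤_N a` iff `length b ≤ length a` and `a i ≤ b i` for all indices `i` of `b`. -/
def leN (b a : List ℕ) : Prop :=
  b.length ≤ a.length ∧ ∀ i, i < b.length → a.getD i 0 ≤ b.getD i 0

/-- The profile of a pair `(u,v)` in an event log `G`: the nondecreasing sorted
list of the sizes of the events of `G` that both `u` and `v` attend. -/
def profile {V : Type*} [DecidableEq V] (G : Multiset (Finset V)) (u v : V) :
    List ℕ :=
  ((G.filter fun P => u ∈ P ∧ v ∈ P).map Finset.card).sort (· ≤ ·)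

/-- If a tie-strength measure has the characterized form
`TS G u v = g (map h (profile u v))` with `h` antitone and `g` monotone (under
appending and pointwise on lists of equal length), then `TS` respects the
partial order `≤_N` on profiles: `profile u₂ v₂ ≤_N profile u₁ v₁` implies
`TS G u₂ v₂ ≤ TS G u₁ v₁`. -/
theorem characterized_form_extends_partial_order {V : Type*} [DecidableEq V]
    (TS : Multiset (Finset V) → V → V → ℝ)
    (G : Multiset (Finset V))
    (h : ℕ → ℝ) (hh : Antitone h)
    (g : List ℝ → ℝ)
    (hg_ext : ∀ l l' : List ℝ, g l ≤ g (l ++ l'))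
    (hg_mono : ∀ x y : List ℝ, List.Forall₂ (· ≤ ·) x y → g x ≤ g y)
    (hform : ∀ u v : V, u ≠ v → TS G u v = g ((profile G u v).map h))
    (u₁ v₁ u₂ v₂ : V) (h₁ : u₁ ≠ v₁) (h₂ : u₂ ≠ v₂)
    (hle : leN (profile G u₂ v₂) (profile G u₁ v₁)) :
    TS G u₂ v₂ ≤ TS G u₁ v₁ := by
  rw [hform u₂ v₂ h₂, hform u₁ v₁ h₁]
  set a := profile G u₁ v₁ with ha
  set b := profile G u₂ v₂ with hb
  obtain ⟨hlen, hpt⟩ := hle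
  have step1 : g (b.map h) ≤ g ((a.take b.length).map h) := by
    apply hg_mono
    rw [List.forall₂_iff_get]
    constructor
    · simp [List.length_take, Nat.min_eq_left hlen]
    · intro i hi1 hi2
      simp only [List.length_map] at hi1 hi2
      simp only [List.get_eq_getElem, List.getElem_map, List.getElem_take]
      apply hh
      have := hpt i hi1
      rwa [List.getD_eq_getElem _ _ (lt_of_lt_of_le (List.length_take .. ▸ hi2) (min_le_right ..)),
        List.getD_eq_getElem _ _ hi1] at this
  calc g (b.map h) ≤ g ((a.take b.length).map h) := step1
    _ ≤ g ((a.take b.length).map h ++ (a.drop b.length).map h) := hg_ext _ _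
    _ = g (a.map h) := by rw [← List.map_append, List.take_append_drop]
end

section
/- The Delta measure TS(G, u, v) = Σ over events P of G with u, v ∈ P of 1/C(|P|,2) satisfies: (a) baseline: TS(∅, u, v) = 0 and TS({{u,v}}, u, v) = 1; (b) frequency: TS(G + {P}, u, v) ≥ TS(G, u, v) whenever u, v ∈ P; (c) intimacy: TS({P \ {w}}, u, v) ≥ TS({P}, u, v) for w ∈ P, w ∉ {u,v}; (d) larger events create more ties: for any events P, Q, the total tie strength created by P alone equals 1 and hence Σ over unordered pairs in P of TS({P}) ≥ Σ over unordered pairs in Q of TS({Q}); (e) conditional independence of vertices: TS(G, u, v) depends only on the events of G containing both u and v; (f) additivity, hence submodularity: TS(G + {Q}, u, v) = TS(G, u, v) + TS({Q}, u, v). -/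
/-- The Delta measure: `TS G u v = Σ_{P ∈ G, u,v ∈ P} 1 / C(|P|,2)` with
`C(n,2) = n(n-1)/2`. -/
noncomputable def TSdelta {V : Type*} [DecidableEq V]
    (G : Multiset (Finset V)) (u v : V) : ℝ :=
  ((G.filter fun P => u ∈ P ∧ v ∈ P).map
    fun P => 1 / ((P.card : ℝ) * ((P.card : ℝ) - 1) / 2)).sum

/-!
Every event `P` with `n = |P| ≥ 2` attendees gives each of its `C(n,2)` unordered pairs the
weight `1 / C(n,2)`, so it distributes a total tie strength of exactly `1`; this weight is
antitone in `n`, which gives intimacy. All the other axioms hold because `TSdelta` is a sum over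
the events, filtered by a predicate, of nonnegative terms.
-/

open Finset

noncomputable def pairWeight (n : ℕ) : ℝ := 1 / ((n : ℝ) * ((n : ℝ) - 1) / 2)

lemma pairWeight_nonneg (n : ℕ) : 0 ≤ pairWeight n := by
  rcases n with _ | n
  · simp [pairWeight]
  · simp only [pairWeight, Nat.cast_add_one, add_sub_cancel_right]
    positivity

lemma pairWeight_two : pairWeight 2 = 1 := by
  norm_num [pairWeight]

lemma pairWeight_le_of_le {m n : ℕ} (hm : 2 ≤ m) (hmn : m ≤ n) :
    pairWeight n ≤ pairWeight m := by
  have hm' : (2 : ℝ) ≤ m := by exact_mod_cast hm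
  have hmn' : (m : ℝ) ≤ n := by exact_mod_cast hmn
  unfold pairWeight
  gcongr <;> nlinarith

lemma mul_pred_mul_pairWeight {n : ℕ} (hn : 2 ≤ n) :
    ((n : ℝ) * n - n) * pairWeight n = 2 := by
  have hn' : (2 : ℝ) ≤ n := by exact_mod_cast hn
  have h1 : (n : ℝ) - 1 ≠ 0 := by linarith
  have h0 : (n : ℝ) ≠ 0 := by linarith
  unfold pairWeight
  field_simp

section TSdelta

variable {V : Type*} [DecidableEq V]

lemma TSdelta_eq_sum (G : Multiset (Finset V)) (u v : V) :
    TSdelta G u v = ((G.filter fun P => u ∈ P ∧ v ∈ P).map fun P => pairWeight #P).sum :=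
  rfl

lemma TSdelta_nonneg (G : Multiset (Finset V)) (u v : V) : 0 ≤ TSdelta G u v := by
  rw [TSdelta_eq_sum]
  refine Multiset.sum_nonneg fun x hx => ?_
  obtain ⟨P, -, rfl⟩ := Multiset.mem_map.mp hx
  exact pairWeight_nonneg _

@[simp]
lemma TSdelta_zero (u v : V) : TSdelta 0 u v = 0 := by
  simp [TSdelta]

lemma TSdelta_singleton (P : Finset V) (u v : V) :
    TSdelta {P} u v = if u ∈ P ∧ v ∈ P then pairWeight #P else 0 := by
  rw [TSdelta_eq_sum, Multiset.filter_singleton]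
  split_ifs <;> simp

lemma TSdelta_singleton_of_mem {P : Finset V} {u v : V} (hu : u ∈ P) (hv : v ∈ P) :
    TSdelta {P} u v = pairWeight #P := by
  rw [TSdelta_singleton, if_pos ⟨hu, hv⟩]

lemma TSdelta_cons (G : Multiset (Finset V)) (Q : Finset V) (u v : V) :
    TSdelta (Q ::ₘ G) u v = TSdelta G u v + TSdelta {Q} u v := by
  rw [← Multiset.singleton_add, add_comm, TSdelta_eq_sum, Multiset.filter_add,
    Multiset.map_add, Multiset.sum_add]
  rfl

lemma TSdelta_le_TSdelta_cons (G : Multiset (Finset V)) (P : Finset V) (u v : V) :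
    TSdelta G u v ≤ TSdelta (P ::ₘ G) u v := by
  rw [TSdelta_cons]
  exact le_add_of_nonneg_right (TSdelta_nonneg _ _ _)

lemma TSdelta_filter_mem (G : Multiset (Finset V)) (u v : V) :
    TSdelta (G.filter fun P => u ∈ P ∧ v ∈ P) u v = TSdelta G u v := by
  simp only [TSdelta, Multiset.filter_filter, and_self]

lemma TSdelta_singleton_le_erase {P : Finset V} {u v w : V} (huv : u ≠ v) (hu : u ∈ P)
    (hv : v ∈ P) (hwu : w ≠ u) (hwv : w ≠ v) :
    TSdelta {P} u v ≤ TSdelta {P.erase w} u v := by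
  have hu' : u ∈ P.erase w := mem_erase.mpr ⟨hwu.symm, hu⟩
  have hv' : v ∈ P.erase w := mem_erase.mpr ⟨hwv.symm, hv⟩
  have htwo : 2 ≤ #(P.erase w) := one_lt_card.mpr ⟨u, hu', v, hv', huv⟩
  rw [TSdelta_singleton_of_mem hu hv, TSdelta_singleton_of_mem hu' hv']
  exact pairWeight_le_of_le htwo card_erase_le

lemma sum_offDiag_TSdelta_singleton (P : Finset V) :
    ∑ p ∈ P.offDiag, TSdelta {P} p.1 p.2 = #P.offDiag * pairWeight #P := by
  rw [← nsmul_eq_mul, ← sum_const]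
  refine sum_congr rfl fun p hp => ?_
  obtain ⟨h1, h2, -⟩ := mem_offDiag.mp hp
  exact TSdelta_singleton_of_mem h1 h2

lemma sum_offDiag_TSdelta_singleton_of_two_le {P : Finset V} (hP : 2 ≤ #P) :
    (∑ p ∈ P.offDiag, TSdelta {P} p.1 p.2) / 2 = 1 := by
  rw [sum_offDiag_TSdelta_singleton, offDiag_card,
    Nat.cast_sub (Nat.le_mul_self _), Nat.cast_mul, mul_pred_mul_pairWeight hP]
  norm_num

lemma sum_offDiag_TSdelta_singleton_mono {P Q : Finset V} (hQP : #Q ≤ #P) :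
    (∑ p ∈ Q.offDiag, TSdelta {Q} p.1 p.2) / 2 ≤
      (∑ p ∈ P.offDiag, TSdelta {P} p.1 p.2) / 2 := by
  by_cases hQ : 2 ≤ #Q
  · rw [sum_offDiag_TSdelta_singleton_of_two_le hQ,
      sum_offDiag_TSdelta_singleton_of_two_le (hQ.trans hQP)]
  · have hQ_offDiag : #Q.offDiag = 0 := by
      obtain h | h : #Q = 0 ∨ #Q = 1 := by omega
      all_goals simp [offDiag_card, h]
    rw [sum_offDiag_TSdelta_singleton, hQ_offDiag, Nat.cast_zero, zero_mul, zero_div]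
    exact div_nonneg (sum_nonneg fun p _ => TSdelta_nonneg _ _ _) zero_le_two

end TSdelta

/-- The Delta measure satisfies: (a) the baseline, (b) the frequency axiom,
(c) the intimacy axiom, (d) larger events create more ties (the total tie
strength of a single event with at least two attendees, formalized as half the
sum over ordered pairs of distinct attendees, equals 1, and hence is monotone
in the event size), (e) conditional independence of vertices (it depends only
on the events containing both people), and (f) additivity, hence
submodularity. -/
theorem delta_satisfies_axioms {V : Type*} [DecidableEq V] :
    (∀ u v : V, u ≠ v → TSdelta (0 : Multiset (Finset V)) u v = 0) ∧
    (∀ u v : V, u ≠ v → TSdelta {({u, v} : Finset V)} u v = 1) ∧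
    (∀ (G : Multiset (Finset V)) (P : Finset V) (u v : V), u ≠ v →
      u ∈ P → v ∈ P → TSdelta G u v ≤ TSdelta (P ::ₘ G) u v) ∧
    (∀ (P : Finset V) (u v w : V), u ≠ v → u ∈ P → v ∈ P → w ∈ P →
      w ≠ u → w ≠ v → TSdelta {P} u v ≤ TSdelta {P.erase w} u v) ∧
    (∀ P : Finset V, 2 ≤ P.card →
      (∑ p ∈ P.offDiag, TSdelta {P} p.1 p.2) / 2 = 1) ∧
    (∀ P Q : Finset V, Q.card ≤ P.card →
      (∑ p ∈ Q.offDiag, TSdelta {Q} p.1 p.2) / 2 ≤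
        (∑ p ∈ P.offDiag, TSdelta {P} p.1 p.2) / 2) ∧
    (∀ (G : Multiset (Finset V)) (u v : V), u ≠ v →
      TSdelta G u v = TSdelta (G.filter fun P => u ∈ P ∧ v ∈ P) u v) ∧
    (∀ (G : Multiset (Finset V)) (Q : Finset V) (u v : V), u ≠ v →
      TSdelta (Q ::ₘ G) u v = TSdelta G u v + TSdelta {Q} u v) := by
  refine ⟨fun u v _ => TSdelta_zero u v, ?baseline,
    fun G P u v _ _ _ => TSdelta_le_TSdelta_cons G P u v,
    fun P u v w huv hu hv _ hwu hwv => TSdelta_singleton_le_erase huv hu hv hwu hwv,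
    fun P hP => sum_offDiag_TSdelta_singleton_of_two_le hP,
    fun P Q hQP => sum_offDiag_TSdelta_singleton_mono hQP,
    fun G u v _ => (TSdelta_filter_mem G u v).symm,
    fun G Q u v _ => TSdelta_cons G Q u v⟩
  case baseline =>
    intro u v huv
    rw [TSdelta_singleton_of_mem (mem_insert_self u {v})
      (mem_insert_of_mem (mem_singleton_self v)), card_pair huv, pairWeight_two]
end
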